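/- Fix t, x ∈ ℝ. Let Φ̂⁰ : ℝ × ℝ → ℝ be such that for each p, the map x̂ ↦ Φ̂⁰(x̂, p) is Lipschitz in x̂ with Lipschitz constant at most 1/(2π), and let φ : ℝ → ℝ satisfy ∫|φ(q)|dq ≤ 2π with strict inequality, i.e. ∫|φ(q)|dq < 2π. Then the map F on the Banach space of bounded measurable functions Φ : ℝ → ℝ (sup norm) defined by F[Φ](p) = Φ̂⁰(x - v(p)·t + ∫φ(p-p')Φ(p')dp', p) is a strict contraction, and hence has a unique bounded fixed point. -/

import Mathlib

/-!
The map is a contraction of ratio `(∫ |φ|) / (2π) < 1` for the sup norm: `Φ̂⁰` is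
`(2π)⁻¹`-Lipschitz in its first argument, and by translation invariance of Lebesgue measure
`|∫ φ (p - p') (Φ₁ - Φ₂) p' dp'| ≤ (∫ |φ|) ‖Φ₁ - Φ₂‖_∞`. Uniform limits of measurable functions
are measurable, so the bounded measurable functions form a closed, hence complete, subset of
`ℓ^∞(ℝ)`, and Banach's fixed-point theorem applies there.
-/

open MeasureTheory Real Set
open scoped ENNReal

section TranslatedIntegral

variable {G : Type*} [MeasurableSpace G] [AddGroup G] [MeasurableAdd₂ G] [MeasurableNeg G]
  {μ : Measure G} [μ.IsAddLeftInvariant] [μ.IsNegInvariant] {φ : G → ℝ}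

theorem MeasureTheory.Integrable.comp_sub_left_mul {Φ : G → ℝ} {C : ℝ} (hφ : Integrable φ μ)
    (hΦ : AEStronglyMeasurable Φ μ) (hC : ∀ y, |Φ y| ≤ C) (x : G) :
    Integrable (fun y => φ (x - y) * Φ y) μ :=
  (hφ.comp_sub_left x).mul_bdd hΦ (.of_forall hC)

theorem abs_integral_comp_sub_mul_le (hφ : Integrable φ μ) {g : G → ℝ} {M : ℝ}
    (hg : ∀ y, |g y| ≤ M) (x : G) :
    |∫ y, φ (x - y) * g y ∂μ| ≤ (∫ y, |φ y| ∂μ) * M :=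
  calc |∫ y, φ (x - y) * g y ∂μ| ≤ ∫ y, |φ (x - y)| * |g y| ∂μ := by
        simpa only [abs_mul] using abs_integral_le_integral_abs (f := fun y => φ (x - y) * g y)
    _ ≤ ∫ y, |φ (x - y)| * M ∂μ :=
        integral_mono_of_nonneg (.of_forall fun _ => by positivity)
          ((hφ.comp_sub_left x).abs.mul_const M)
          (.of_forall fun y => mul_le_mul_of_nonneg_left (hg y) (abs_nonneg _))
    _ = (∫ y, |φ y| ∂μ) * M := by
        rw [integral_mul_const, integral_sub_left_eq_self (fun y => |φ y|)]

theorem abs_integral_comp_sub_mul_sub_le (hφ : Integrable φ μ) {Φ₁ Φ₂ : G → ℝ} {C₁ C₂ M : ℝ}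
    (h₁ : AEStronglyMeasurable Φ₁ μ) (h₂ : AEStronglyMeasurable Φ₂ μ)
    (hC₁ : ∀ y, |Φ₁ y| ≤ C₁) (hC₂ : ∀ y, |Φ₂ y| ≤ C₂) (hM : ∀ y, |Φ₁ y - Φ₂ y| ≤ M) (x : G) :
    |(∫ y, φ (x - y) * Φ₁ y ∂μ) - ∫ y, φ (x - y) * Φ₂ y ∂μ| ≤ (∫ y, |φ y| ∂μ) * M := by
  rw [← integral_sub (hφ.comp_sub_left_mul h₁ hC₁ x) (hφ.comp_sub_left_mul h₂ hC₂ x)]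
  simp_rw [← mul_sub]
  exact abs_integral_comp_sub_mul_le hφ hM x

theorem measurable_integral_comp_sub_mul [SFinite μ] (hφ : AEStronglyMeasurable φ μ)
    {Φ : G → ℝ} (hΦ : Measurable Φ) : Measurable fun x => ∫ y, φ (x - y) * Φ y ∂μ := by
  -- a strongly measurable representative of `φ` makes the integrand jointly measurable
  have hmk : ∀ x, ∫ y, φ (x - y) * Φ y ∂μ = ∫ y, hφ.mk φ (x - y) * Φ y ∂μ := fun x =>
    have hmp := (Measure.measurePreserving_sub_left μ x).quasiMeasurePreserving
    integral_congr_ae <| (hmp.ae_eq_comp hφ.ae_eq_mk).mul_right (f₃ := Φ)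
  simp_rw [hmk]
  exact ((hφ.stronglyMeasurable_mk.measurable.comp measurable_sub).mul
    (hΦ.comp measurable_snd)).stronglyMeasurable.integral_prod_right'.measurable

end TranslatedIntegral

theorem lp.isClosed_setOf_measurable {α E : Type*} [MeasurableSpace α] [NormedAddCommGroup E]
    [MeasurableSpace E] [BorelSpace E] :
    IsClosed {f : lp (fun _ : α => E) ∞ | Measurable (f : α → E)} :=
  isSeqClosed_iff_isClosed.mp fun _ _ hu hf =>
    measurable_of_tendsto_metrizable hu ((lp.uniformContinuous_coe.continuous.tendsto _).comp hf)

theorem bddAbove_range_abs_sub {α : Type*} {f g : α → ℝ} {C₁ C₂ : ℝ} (h₁ : ∀ x, |f x| ≤ C₁)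
    (h₂ : ∀ x, |g x| ≤ C₂) : BddAbove (range fun x => |f x - g x|) :=
  ⟨C₁ + C₂, forall_mem_range.2 fun x => (abs_sub _ _).trans (add_le_add (h₁ x) (h₂ x))⟩

theorem existsUnique_fixedPoint_of_abs_sub_le {α : Type*} [MeasurableSpace α]
    (F : (α → ℝ) → α → ℝ) {K : ℝ} (hK : K < 1)
    (hF_meas : ∀ f, Measurable f → Measurable (F f))
    (hF_bdd : ∀ f, Measurable f → (∃ C, ∀ x, |f x| ≤ C) → ∃ C, ∀ x, |F f x| ≤ C)
    (hF_lip : ∀ f g, Measurable f → Measurable g → (∃ C, ∀ x, |f x| ≤ C) →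
      (∃ C, ∀ x, |g x| ≤ C) → ∀ M, (∀ x, |f x - g x| ≤ M) → ∀ x, |F f x - F g x| ≤ K * M) :
    ∃! Φ : {f : α → ℝ // Measurable f ∧ ∃ C, ∀ x, |f x| ≤ C}, ∀ x, (Φ : α → ℝ) x = F Φ x := by
  set S := {f : lp (fun _ : α => ℝ) ∞ | Measurable (f : α → ℝ)}
  have : CompleteSpace S := lp.isClosed_setOf_measurable.completeSpace_coe
  have : Nonempty S :=
    ⟨⟨0, show Measurable ⇑(0 : lp _ ∞) by rw [lp.coeFn_zero]; exact measurable_const⟩⟩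
  have hnorm : ∀ (f : lp (fun _ : α => ℝ) ∞) x, |f x| ≤ ‖f‖ :=
    lp.norm_apply_le_norm ENNReal.top_ne_zero
  let toLp (f : α → ℝ) (hf : ∃ C, ∀ x, |f x| ≤ C) : lp (fun _ : α => ℝ) ∞ :=
    ⟨f, memℓp_infty (hf.imp fun _ hC => forall_mem_range.2 hC)⟩
  let T : S → S := fun f => ⟨toLp (F f) (hF_bdd f f.2 ⟨_, hnorm f⟩), hF_meas f f.2⟩
  have hT : ContractingWith K.toNNReal T := by
    refine ⟨Real.toNNReal_lt_one.2 hK, LipschitzWith.of_dist_le_mul fun f g => ?_⟩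
    rw [Subtype.dist_eq, Subtype.dist_eq, dist_eq_norm, dist_eq_norm]
    refine lp.norm_le_of_forall_le (by positivity) fun x => ?_
    calc |F f x - F g x| ≤ K * ‖(f : lp (fun _ : α => ℝ) ∞) - g‖ :=
          hF_lip f g f.2 g.2 ⟨_, hnorm f⟩ ⟨_, hnorm g⟩ _ (hnorm (f - g)) x
      _ ≤ K.toNNReal * ‖(f : lp (fun _ : α => ℝ) ∞) - g‖ := by gcongr; exact Real.le_coe_toNNReal K
  have hfix : ∀ Φ : S, Function.IsFixedPt T Φ ↔ ∀ x, (Φ : α → ℝ) x = F Φ x := fun Φ =>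
    ⟨fun h x => (congrFun (congrArg (fun f : S => ⇑(f : lp (fun _ : α => ℝ) ∞)) h) x).symm,
      fun h => (Subtype.ext (lp.ext (funext fun x => (h x).symm)) : T Φ = Φ)⟩
  obtain ⟨Φ₀, hΦ₀⟩ : ∃ Φ₀ : S, Function.IsFixedPt T Φ₀ := ⟨_, hT.fixedPoint_isFixedPt⟩
  refine ⟨⟨Φ₀, Φ₀.2, _, hnorm Φ₀⟩, (hfix Φ₀).1 hΦ₀, fun Ψ hΨ => Subtype.ext ?_⟩
  exact congrArg (fun f : S => ⇑(f : lp (fun _ : α => ℝ) ∞))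
    (hT.fixedPoint_unique' ((hfix ⟨toLp Ψ Ψ.2.2, Ψ.2.1⟩).2 hΨ) hΦ₀)

/-- The GHD space-time quadrature map `F[Φ](p) = Φ̂⁰(x - v(p)t + ∫φ(p-p')Φ(p')dp', p)` is a
strict contraction on bounded measurable functions (Lipschitz constant `(∫|φ|)/(2π) < 1`),
and hence has a unique bounded measurable fixed point. -/
theorem stmt_6 (t x : ℝ) (v : ℝ → ℝ) (hv : Measurable v)
    (Phat : ℝ → ℝ → ℝ)
    (hPmeas : Measurable (Function.uncurry Phat))
    (hPbdd : ∃ C, ∀ a p, |Phat a p| ≤ C)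
    (hPlip : ∀ p a b, |Phat a p - Phat b p| ≤ (1 / (2 * π)) * |a - b|)
    (φ : ℝ → ℝ) (hφ : Integrable φ) (hφlt : (∫ q, |φ q|) < 2 * π) :
    (∀ Φ₁ Φ₂ : ℝ → ℝ, Measurable Φ₁ → Measurable Φ₂ →
      (∃ C, ∀ p, |Φ₁ p| ≤ C) → (∃ C, ∀ p, |Φ₂ p| ≤ C) →
      ∀ p : ℝ, |Phat (x - v p * t + ∫ p', φ (p - p') * Φ₁ p') p -
            Phat (x - v p * t + ∫ p', φ (p - p') * Φ₂ p') p| ≤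
        ((∫ q, |φ q|) / (2 * π)) * ⨆ p' : ℝ, |Φ₁ p' - Φ₂ p'|) ∧
    (∃! Φ : {g : ℝ → ℝ // Measurable g ∧ ∃ C, ∀ p, |g p| ≤ C},
      ∀ p : ℝ, (Φ : ℝ → ℝ) p =
        Phat (x - v p * t + ∫ p', φ (p - p') * (Φ : ℝ → ℝ) p') p) := by
  obtain ⟨C₀, hC₀⟩ := hPbdd
  have hcontr : ∀ Φ₁ Φ₂ : ℝ → ℝ, Measurable Φ₁ → Measurable Φ₂ →
      (∃ C, ∀ p, |Φ₁ p| ≤ C) → (∃ C, ∀ p, |Φ₂ p| ≤ C) → ∀ M, (∀ p', |Φ₁ p' - Φ₂ p'| ≤ M) →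
      ∀ p : ℝ, |Phat (x - v p * t + ∫ p', φ (p - p') * Φ₁ p') p -
        Phat (x - v p * t + ∫ p', φ (p - p') * Φ₂ p') p| ≤ ((∫ q, |φ q|) / (2 * π)) * M := by
    rintro Φ₁ Φ₂ h₁ h₂ ⟨C₁, hC₁⟩ ⟨C₂, hC₂⟩ M hM p
    calc _ ≤ 1 / (2 * π) * |(∫ p', φ (p - p') * Φ₁ p') - ∫ p', φ (p - p') * Φ₂ p'| :=
          (hPlip p _ _).trans_eq (by rw [add_sub_add_left_eq_sub])
      _ ≤ 1 / (2 * π) * ((∫ q, |φ q|) * M) := by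
          gcongr
          exact abs_integral_comp_sub_mul_sub_le hφ h₁.aestronglyMeasurable
            h₂.aestronglyMeasurable hC₁ hC₂ hM p
      _ = (∫ q, |φ q|) / (2 * π) * M := by ring
  refine ⟨?_, existsUnique_fixedPoint_of_abs_sub_le
    (fun Φ p => Phat (x - v p * t + ∫ p', φ (p - p') * Φ p') p)
    ((div_lt_one (by positivity)).2 hφlt) (fun Φ hΦ => ?_)
    (fun _ _ _ => ⟨C₀, fun p => hC₀ _ p⟩) hcontr⟩
  · rintro Φ₁ Φ₂ h₁ h₂ ⟨C₁, hC₁⟩ ⟨C₂, hC₂⟩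
    exact hcontr Φ₁ Φ₂ h₁ h₂ ⟨C₁, hC₁⟩ ⟨C₂, hC₂⟩ _ (le_ciSup (bddAbove_range_abs_sub hC₁ hC₂))
  · exact hPmeas.comp (((measurable_const.sub (hv.mul_const t)).add
      (measurable_integral_comp_sub_mul hφ.1 hΦ)).prodMk measurable_id)
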